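/- arXiv:1704.07654 — 4 statements merged into one kernel-verified Lean document; each statement's English description precedes it below -/
import Mathlib

section
/- Let X be a finite-dimensional scheme (i.e., its underlying topological space has finite Krull dimension d). Then there exists a closed point x of X such that the local dimension of X at x equals d, where the local dimension at x is the infimum over open neighbourhoods U of x of the Krull dimension of U. -/
/-! The bottom `Z` of a longest chain of irreducible closed sets has coheight `d` and is
minimal; in a sober space a minimal irreducible closed set is a closed point `x`. Coheight is
unchanged on passing to an open subspace meeting `Z`, so every open neighbourhood of `x` still
has dimension `≥ d`, and no subspace has dimension `> d`. -/

open AlgebraicGeometry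
open TopologicalSpace Order

/-- The local dimension of a topological space at a point: the infimum over open
neighbourhoods `U` of `x` of the Krull dimension of `U`. -/
noncomputable def localDim (X : Type*) [TopologicalSpace X] (x : X) : WithBot ℕ∞ :=
  ⨅ U : {U : Set X // IsOpen U ∧ x ∈ U}, topologicalKrullDim ↥U.1

lemma Order.exists_isMin_coheight_eq_krullDim {α : Type*} [Preorder α] {d : ℕ}
    (hd : krullDim α = d) : ∃ a : α, IsMin a ∧ (coheight a : WithBot ℕ∞) = krullDim α := by
  obtain ⟨p, hp⟩ := le_krullDim_iff.mp hd.ge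
  have hcoheight : (coheight p.head : WithBot ℕ∞) = krullDim α :=
    (coheight_le_krullDim _).antisymm (hd ▸ hp ▸ by exact_mod_cast length_le_coheight_head)
  refine ⟨p.head, fun b hb => ?_, hcoheight⟩
  by_contra hnot
  have hfin : coheight p.head < ⊤ := by
    have : coheight p.head = d := by exact_mod_cast hcoheight.trans hd
    exact this ▸ ENat.natCast_lt_top d
  have hlt := coheight_strictAnti (lt_of_le_not_ge hb hnot) hfin
  exact (coheight_le_krullDim b).not_gt (hcoheight ▸ WithBot.coe_lt_coe.mpr hlt)

namespace TopologicalSpace.IrreducibleCloseds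

variable {X : Type*} [TopologicalSpace X]

lemma exists_eq_singleton_of_isMin [QuasiSober X] [T0Space X] {Z : IrreducibleCloseds X}
    (hZ : IsMin Z) : ∃ x : X, (Z : Set X) = {x} := by
  have hgen := Z.isIrreducible.isGenericPoint_genericPoint Z.isClosed
  refine ⟨Z.isIrreducible.genericPoint, Set.eq_singleton_iff_unique_mem.mpr ⟨hgen.mem, ?_⟩⟩
  intro y hy
  let Y : IrreducibleCloseds X := ⟨closure {y}, isIrreducible_singleton.closure, isClosed_closure⟩
  have hYZ : Z ≤ Y := hZ (closure_minimal (Set.singleton_subset_iff.mpr hy) Z.isClosed)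
  exact ((hgen.specializes hy).antisymm (specializes_iff_mem_closure.mpr (hYZ hgen.mem))).eq.symm

end TopologicalSpace.IrreducibleCloseds

section

variable {X Y : Type*} [TopologicalSpace X] [TopologicalSpace Y]

lemma Topology.IsOpenEmbedding.coheight_le_topologicalKrullDim {f : Y → X}
    (hf : Topology.IsOpenEmbedding f) {Z : IrreducibleCloseds X} (hZ : (f ⁻¹' Z).Nonempty) :
    (coheight Z : WithBot ℕ∞) ≤ topologicalKrullDim Y := by
  let W := (IrreducibleCloseds.orderIsoOfIsOpenEmbedding f hf).symm ⟨Z, hZ⟩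
  have hW : IrreducibleCloseds.map f hf.continuous W = Z :=
    congrArg Subtype.val ((IrreducibleCloseds.orderIsoOfIsOpenEmbedding f hf).apply_symm_apply _)
  rw [← hW, hf.coheight_map]
  exact coheight_le_krullDim W

lemma localDim_eq_topologicalKrullDim {x : X} {Z : IrreducibleCloseds X} (hx : x ∈ Z)
    (hZ : (coheight Z : WithBot ℕ∞) = topologicalKrullDim X) :
    localDim X x = topologicalKrullDim X := by
  refine le_antisymm (iInf_le_of_le ⟨Set.univ, isOpen_univ, trivial⟩ ?_) (le_iInf ?_)
  · exact topologicalKrullDim_subspace_le X Set.univ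
  · rintro ⟨U, hU, hxU⟩
    exact hZ ▸ hU.isOpenEmbedding_subtypeVal.coheight_le_topologicalKrullDim ⟨⟨x, hxU⟩, hx⟩

end

theorem scheme_exists_closed_point_localDim_eq_dim (X : Scheme) (d : ℕ)
    (hd : topologicalKrullDim X = (d : WithBot ℕ∞)) :
    ∃ x : X, IsClosed ({x} : Set X) ∧ localDim X x = (d : WithBot ℕ∞) := by
  obtain ⟨Z, hmin, hZ⟩ := exists_isMin_coheight_eq_krullDim hd
  obtain ⟨x, hx⟩ := IrreducibleCloseds.exists_eq_singleton_of_isMin hmin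
  have hxZ : x ∈ Z := by rw [← SetLike.mem_coe, hx]; rfl
  exact ⟨x, hx ▸ Z.isClosed, (localDim_eq_topologicalKrullDim hxZ hZ).trans hd⟩
end

section
/- Let X be an irreducible, equicodimensional, finite-dimensional topological space. Then the following are equivalent: (1) X is catenary; (2) for all irreducible closed subsets Y ⊆ Z of X, dim Y + codim(Y, Z) = dim Z; (3) all maximal chains of irreducible closed subsets of X have the same length. -/
open TopologicalSpace Order
/-- A chain of irreducible closed subsets is saturated (maximal with given endpoints)
if each step is a covering relation. -/
def IsSaturatedChain {X : Type*} [TopologicalSpace X]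
    (p : LTSeries (IrreducibleCloseds X)) : Prop :=
  ∀ i : Fin p.length, p.toFun i.castSucc ⋖ p.toFun i.succ

/-- A topological space is catenary if any two saturated chains of irreducible closed
subsets with the same endpoints have the same length. -/
def IsCatenarySpace (X : Type*) [TopologicalSpace X] : Prop :=
  ∀ p q : LTSeries (IrreducibleCloseds X), p.head = q.head → p.last = q.last →
    IsSaturatedChain p → IsSaturatedChain q → p.length = q.length

/-- A maximal chain of irreducible closed subsets: saturated, starting at a minimal
irreducible closed subset and ending at a maximal one. -/
def IsMaximalChain {X : Type*} [TopologicalSpace X]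
    (p : LTSeries (IrreducibleCloseds X)) : Prop :=
  IsSaturatedChain p ∧ IsMin p.head ∧ IsMax p.last

/-- The codimension `codim(Y, Z)`: the supremum of lengths of chains of irreducible
closed subsets from `Y` to `Z`. -/
noncomputable def relCodim {X : Type*} [TopologicalSpace X]
    (Y Z : IrreducibleCloseds X) : ℕ∞ :=
  ⨆ p : {p : LTSeries (IrreducibleCloseds X) // p.head = Y ∧ p.last = Z},
    (p.1.length : ℕ∞)

/-- The dimension of the irreducible closed subset `Y`: the supremum of lengths of
chains of irreducible closed subsets contained in `Y`. -/
noncomputable def chainDim {X : Type*} [TopologicalSpace X]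
    (Y : IrreducibleCloseds X) : ℕ∞ :=
  ⨆ p : {p : LTSeries (IrreducibleCloseds X) // p.last ≤ Y}, (p.1.length : ℕ∞)

/-- The dimension of `X`: the supremum of lengths of chains of irreducible closed
subsets of `X`. -/
noncomputable def spaceDim (X : Type*) [TopologicalSpace X] : ℕ∞ :=
  ⨆ p : LTSeries (IrreducibleCloseds X), (p.length : ℕ∞)

/-- The codimension of `Y` in the ambient space: the supremum of lengths of chains of
irreducible closed subsets starting at `Y`. -/
noncomputable def codimAbove {X : Type*} [TopologicalSpace X]
    (Y : IrreducibleCloseds X) : ℕ∞ :=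
  ⨆ p : {p : LTSeries (IrreducibleCloseds X) // p.head = Y}, (p.1.length : ℕ∞)

/-- A topological space is equicodimensional if all minimal irreducible closed subsets
have the same codimension. -/
def IsEquicodim (X : Type*) [TopologicalSpace X] : Prop :=
  ∀ Y Y' : IrreducibleCloseds X, IsMin Y → IsMin Y' → codimAbove Y = codimAbove Y'

/-!
Under finite dimension each of the suprema `chainDim`, `relCodim`, `codimAbove` is attained,
and a longest chain with prescribed ends is saturated.

(2) ⇒ (1): for a covering pair `Y ⋖ Z` we have `relCodim Y Z = 1`, so (2) says that `chainDim`
rises by exactly one along each step of a saturated chain; the length of a saturated chain is then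
the difference of the (finite) dimensions of its ends.

(1) ⇒ (3): `X` is the only maximal irreducible closed subset, so by catenarity a maximal chain has
the length of a longest chain from its head upwards, namely `codimAbove` of its head; this does not
depend on the (minimal) head by equicodimensionality.

(3) ⇒ (2): a longest chain ending at `Y`, followed by a longest chain from `Y` to `Z` and a
longest chain from `Z` upwards, is a maximal chain; so is a longest chain ending at `Z` followed by
the same chain from `Z` upwards.
-/

namespace RelSeries

variable {α : Type*} {r : SetRel α α}

lemma head_insertNth (p : RelSeries r) (i : Fin p.length) (a : α) (h₁ : (p i.castSucc, a) ∈ r)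
    (h₂ : (a, p i.succ) ∈ r) : (p.insertNth i a h₁ h₂).head = p.head := by
  change Fin.insertNth (α := fun _ ↦ α) i.succ.castSucc a p 0 = p 0
  rw [Fin.insertNth_apply_below (by simp [Fin.lt_def])]
  rfl

lemma last_insertNth (p : RelSeries r) (i : Fin p.length) (a : α) (h₁ : (p i.castSucc, a) ∈ r)
    (h₂ : (a, p i.succ) ∈ r) : (p.insertNth i a h₁ h₂).last = p.last := by
  change Fin.insertNth (α := fun _ ↦ α) i.succ.castSucc a p (Fin.last _) = p (Fin.last _)
  rw [Fin.insertNth_apply_above (Fin.castSucc_lt_last _), eq_rec_constant]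
  rfl

end RelSeries

namespace LTSeries

variable {α : Type*} [PartialOrder α]

/-- `IsSaturatedChain p` unfolds to `p.IsSaturated`; the two are used interchangeably below. -/
def IsSaturated (p : LTSeries α) : Prop :=
  ∀ i : Fin p.length, p i.castSucc ⋖ p i.succ

lemma isSaturated_of_forall_length_le {p : LTSeries α}
    (h : ∀ q : LTSeries α, q.head = p.head → q.last = p.last → q.length ≤ p.length) :
    p.IsSaturated := fun i ↦
  ⟨p.step i, fun a h₁ h₂ ↦ by
    simpa using h (p.insertNth i a h₁ h₂) (RelSeries.head_insertNth p i a h₁ h₂)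
      (RelSeries.last_insertNth p i a h₁ h₂)⟩

lemma isMin_head_of_forall_length_le {p : LTSeries α}
    (h : ∀ q : LTSeries α, q.last = p.last → q.length ≤ p.length) : IsMin p.head := by
  intro a ha
  by_contra hna
  simpa using h (p.cons a (lt_of_le_not_ge ha hna)) (p.last_cons _ _)

lemma isMax_last_of_forall_length_le {p : LTSeries α}
    (h : ∀ q : LTSeries α, q.head = p.head → q.length ≤ p.length) : IsMax p.last := by
  intro a ha
  by_contra hna
  simpa using h (p.snoc a (lt_of_le_not_ge ha hna)) (p.head_snoc _ _)

lemma IsSaturated.smash {p q : LTSeries α} (h : p.last = q.head) (hp : p.IsSaturated)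
    (hq : q.IsSaturated) : IsSaturated (p.smash q h) := by
  refine Fin.addCases (fun i ↦ ?_) (fun i ↦ ?_)
  · have := hp i
    rwa [← RelSeries.smash_castAdd h, ← RelSeries.smash_succ_castAdd h] at this
  · have := hq i
    rwa [← RelSeries.smash_natAdd h, ← RelSeries.smash_succ_natAdd h] at this

lemma IsSaturated.apply_last_eq_add_length {M : Type*} [AddMonoidWithOne M] {f : α → M}
    (hf : ∀ a b, a ⋖ b → f b = f a + 1) {p : LTSeries α} (hp : p.IsSaturated) :
    f p.last = f p.head + p.length := by
  suffices ∀ k (hk : k < p.length + 1), f (p ⟨k, hk⟩) = f p.head + k from this _ (by omega)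
  intro k
  induction k with
  | zero => intro; rw [Nat.cast_zero, add_zero]; rfl
  | succ k ih =>
    intro hk
    calc f (p ⟨k + 1, hk⟩) = f (p ⟨k, by omega⟩) + 1 := hf _ _ (hp ⟨k, by omega⟩)
      _ = f p.head + (k + 1 : ℕ) := by rw [ih, Nat.cast_succ, add_assoc]

lemma length_le_one_of_head_covBy_last {p : LTSeries α} (h : p.head ⋖ p.last) :
    p.length ≤ 1 := by
  by_contra! hp
  exact h.2 (p.strictMono (show (0 : Fin (p.length + 1)) < ⟨1, by omega⟩ from Nat.one_pos))
    (p.strictMono (show (⟨1, by omega⟩ : Fin (p.length + 1)) < Fin.last _ from hp))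

lemma exists_length_eq_iSup {P : LTSeries α → Prop} (hP : ∃ p, P p)
    (hfin : ⨆ p : {p // P p}, (p.1.length : ℕ∞) ≠ ⊤) :
    ∃ p, P p ∧ ⨆ p : {p // P p}, (p.1.length : ℕ∞) = p.length ∧
      ∀ q, P q → q.length ≤ p.length := by
  have : Nonempty {p // P p} := hP.elim fun p hp ↦ ⟨⟨p, hp⟩⟩
  obtain ⟨⟨p, hp⟩, hsup⟩ := ENat.exists_eq_iSup_of_lt_top hfin.lt_top
  refine ⟨p, hp, hsup.symm, fun q hq ↦ ?_⟩
  exact_mod_cast hsup ▸ le_iSup (fun p : {p // P p} ↦ (p.1.length : ℕ∞)) ⟨q, hq⟩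

end LTSeries

section

variable {X : Type*} [TopologicalSpace X]

open LTSeries

lemma TopologicalSpace.IrreducibleCloseds.eq_of_isMax [IrreducibleSpace X]
    {M N : IrreducibleCloseds X} (hM : IsMax M) (hN : IsMax N) : M = N := by
  let U : IrreducibleCloseds X :=
    ⟨Set.univ, IrreducibleSpace.isIrreducible_univ X, isClosed_univ⟩
  have hU {M : IrreducibleCloseds X} (hM : IsMax M) : M = U :=
    hM.eq_of_le (Set.subset_univ (M : Set X))
  exact (hU hM).trans (hU hN).symm

lemma iSup_length_le_spaceDim (P : LTSeries (IrreducibleCloseds X) → Prop) :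
    ⨆ p : {p // P p}, (p.1.length : ℕ∞) ≤ spaceDim X :=
  iSup_le fun p ↦ le_iSup (fun p : LTSeries (IrreducibleCloseds X) ↦ (p.length : ℕ∞)) p.1

lemma chainDim_ne_top (hfin : spaceDim X ≠ ⊤) (Y : IrreducibleCloseds X) : chainDim Y ≠ ⊤ :=
  ne_top_of_le_ne_top hfin (iSup_length_le_spaceDim _)

lemma exists_length_eq_iSup_of_spaceDim_ne_top (hfin : spaceDim X ≠ ⊤)
    {P : LTSeries (IrreducibleCloseds X) → Prop} (hP : ∃ p, P p) :
    ∃ p, P p ∧ ⨆ p : {p // P p}, (p.1.length : ℕ∞) = p.length ∧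
      ∀ q, P q → q.length ≤ p.length :=
  exists_length_eq_iSup hP (ne_top_of_le_ne_top hfin (iSup_length_le_spaceDim P))

lemma exists_isSaturatedChain_chainDim_eq (hfin : spaceDim X ≠ ⊤) (Y : IrreducibleCloseds X) :
    ∃ p : LTSeries (IrreducibleCloseds X), p.last = Y ∧ IsMin p.head ∧ IsSaturatedChain p ∧
      chainDim Y = p.length := by
  obtain ⟨p, hpY, hdim, hlongest⟩ := exists_length_eq_iSup_of_spaceDim_ne_top hfin
    (P := fun p ↦ p.last ≤ Y) ⟨RelSeries.singleton _ Y, le_rfl⟩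
  have hlast : p.last = Y := by
    by_contra hne
    simpa using hlongest (p.snoc Y (lt_of_le_of_ne hpY hne)) (by simp)
  have hlongest' (q : LTSeries (IrreducibleCloseds X)) (hq : q.last = p.last) :
      q.length ≤ p.length := hlongest q (hq.trans_le hpY)
  exact ⟨p, hlast, isMin_head_of_forall_length_le hlongest',
    isSaturated_of_forall_length_le fun q _ hq ↦ hlongest' q hq, hdim⟩

lemma exists_isSaturatedChain_relCodim_eq (hfin : spaceDim X ≠ ⊤) {Y Z : IrreducibleCloseds X}
    (hYZ : Y ≤ Z) :
    ∃ p : LTSeries (IrreducibleCloseds X), p.head = Y ∧ p.last = Z ∧ IsSaturatedChain p ∧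
      relCodim Y Z = p.length := by
  have hchain : ∃ p : LTSeries (IrreducibleCloseds X), p.head = Y ∧ p.last = Z := by
    rcases hYZ.eq_or_lt with rfl | hlt
    · exact ⟨RelSeries.singleton _ Y, rfl, rfl⟩
    · exact ⟨(RelSeries.singleton _ Z).cons Y hlt, rfl, rfl⟩
  obtain ⟨p, ⟨hpY, hpZ⟩, hcodim, hlongest⟩ :=
    exists_length_eq_iSup_of_spaceDim_ne_top hfin hchain
  exact ⟨p, hpY, hpZ, isSaturated_of_forall_length_le fun q hqY hqZ ↦
    hlongest q ⟨hqY.trans hpY, hqZ.trans hpZ⟩, hcodim⟩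

lemma exists_isSaturatedChain_codimAbove_eq (hfin : spaceDim X ≠ ⊤) (Y : IrreducibleCloseds X) :
    ∃ p : LTSeries (IrreducibleCloseds X), p.head = Y ∧ IsMax p.last ∧ IsSaturatedChain p ∧
      codimAbove Y = p.length := by
  obtain ⟨p, hpY, hcodim, hlongest⟩ := exists_length_eq_iSup_of_spaceDim_ne_top hfin
    (P := fun p ↦ p.head = Y) ⟨RelSeries.singleton _ Y, rfl⟩
  have hlongest' (q : LTSeries (IrreducibleCloseds X)) (hq : q.head = p.head) :
      q.length ≤ p.length := hlongest q (hq.trans hpY)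
  exact ⟨p, hpY, isMax_last_of_forall_length_le hlongest',
    isSaturated_of_forall_length_le fun q hq _ ↦ hlongest' q hq, hcodim⟩

lemma relCodim_eq_one_of_covBy {Y Z : IrreducibleCloseds X} (h : Y ⋖ Z) : relCodim Y Z = 1 := by
  refine le_antisymm (iSup_le fun ⟨p, hpY, hpZ⟩ ↦ ?_) ?_
  · exact_mod_cast length_le_one_of_head_covBy_last (hpY ▸ hpZ ▸ h)
  · exact le_iSup_of_le ⟨(RelSeries.singleton _ Z).cons Y h.lt, rfl, rfl⟩
      (by exact_mod_cast le_rfl)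

lemma isMaximalChain_smash {p q : LTSeries (IrreducibleCloseds X)} (h : p.last = q.head)
    (hp : IsSaturatedChain p) (hq : IsSaturatedChain q) (hmin : IsMin p.head)
    (hmax : IsMax q.last) : IsMaximalChain (p.smash q h) :=
  ⟨IsSaturated.smash h hp hq, by simpa using hmin, by simpa using hmax⟩

lemma IsCatenarySpace.length_eq_codimAbove [IrreducibleSpace X] (hcat : IsCatenarySpace X)
    (hfin : spaceDim X ≠ ⊤) {p : LTSeries (IrreducibleCloseds X)} (hp : IsSaturatedChain p)
    (hmax : IsMax p.last) : (p.length : ℕ∞) = codimAbove p.head := by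
  obtain ⟨q, hq, hqmax, hqsat, hcodim⟩ := exists_isSaturatedChain_codimAbove_eq hfin p.head
  rw [hcodim, hcat p q hq.symm (IrreducibleCloseds.eq_of_isMax hmax hqmax) hp hqsat]

lemma IsCatenarySpace.length_eq_of_isMaximalChain [IrreducibleSpace X]
    (hcat : IsCatenarySpace X) (heq : IsEquicodim X) (hfin : spaceDim X ≠ ⊤)
    (p q : LTSeries (IrreducibleCloseds X)) (hp : IsMaximalChain p) (hq : IsMaximalChain q) :
    p.length = q.length := by
  have := hcat.length_eq_codimAbove hfin hp.1 hp.2.2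
  rw [heq _ _ hp.2.1 hq.2.1, ← hcat.length_eq_codimAbove hfin hq.1 hq.2.2] at this
  exact Nat.cast_injective this

lemma chainDim_add_relCodim_of_isMaximalChain (hfin : spaceDim X ≠ ⊤)
    (h : ∀ p q : LTSeries (IrreducibleCloseds X),
      IsMaximalChain p → IsMaximalChain q → p.length = q.length)
    (Y Z : IrreducibleCloseds X) (hYZ : Y ≤ Z) : chainDim Y + relCodim Y Z = chainDim Z := by
  obtain ⟨a, haY, hamin, hasat, hadim⟩ := exists_isSaturatedChain_chainDim_eq hfin Y
  obtain ⟨b, hbY, hbZ, hbsat, hbcodim⟩ := exists_isSaturatedChain_relCodim_eq hfin hYZ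
  obtain ⟨c, hcZ, hcmax, hcsat, -⟩ := exists_isSaturatedChain_codimAbove_eq hfin Z
  obtain ⟨d, hdZ, hdmin, hdsat, hddim⟩ := exists_isSaturatedChain_chainDim_eq hfin Z
  have hab : a.last = b.head := haY.trans hbY.symm
  have habc : (a.smash b hab).last = c.head := by rw [RelSeries.last_smash, hbZ, hcZ]
  have hdc : d.last = c.head := hdZ.trans hcZ.symm
  have hlen := h _ _
    (isMaximalChain_smash habc (IsSaturated.smash hab hasat hbsat) hcsat
      (by simpa using hamin) hcmax)
    (isMaximalChain_smash hdc hdsat hcsat hdmin hcmax)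
  simp only [RelSeries.smash_length] at hlen
  rw [hadim, hbcodim, hddim]
  exact_mod_cast (by omega : a.length + b.length = d.length)

lemma IsCatenarySpace.of_chainDim_add_relCodim (hfin : spaceDim X ≠ ⊤)
    (h : ∀ Y Z : IrreducibleCloseds X, Y ≤ Z → chainDim Y + relCodim Y Z = chainDim Z) :
    IsCatenarySpace X := by
  have hcov (Y Z : IrreducibleCloseds X) (hYZ : Y ⋖ Z) : chainDim Z = chainDim Y + 1 := by
    rw [← h Y Z hYZ.le, relCodim_eq_one_of_covBy hYZ]
  intro p q hhead hlast hp hq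
  have hpdim := IsSaturated.apply_last_eq_add_length hcov hp
  rw [hhead, hlast, IsSaturated.apply_last_eq_add_length hcov hq] at hpdim
  exact Nat.cast_injective (WithTop.add_left_cancel (chainDim_ne_top hfin _) hpdim).symm

end

theorem catenary_tfae_of_equicodim (X : Type*) [TopologicalSpace X] [IrreducibleSpace X]
    (heq : IsEquicodim X) (hfin : spaceDim X ≠ ⊤) :
    (IsCatenarySpace X ↔
      (∀ Y Z : IrreducibleCloseds X, Y ≤ Z → chainDim Y + relCodim Y Z = chainDim Z)) ∧
    ((∀ Y Z : IrreducibleCloseds X, Y ≤ Z → chainDim Y + relCodim Y Z = chainDim Z) ↔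
      (∀ p q : LTSeries (IrreducibleCloseds X),
        IsMaximalChain p → IsMaximalChain q → p.length = q.length)) := by
  refine ⟨⟨fun h1 ↦ ?_, IsCatenarySpace.of_chainDim_add_relCodim hfin⟩,
    ⟨fun h2 ↦ ?_, chainDim_add_relCodim_of_isMaximalChain hfin⟩⟩
  · exact chainDim_add_relCodim_of_isMaximalChain hfin (h1.length_eq_of_isMaximalChain heq hfin)
  · exact (IsCatenarySpace.of_chainDim_add_relCodim hfin h2).length_eq_of_isMaximalChain heq hfin
end

section
/- Let X be an irreducible, equicodimensional, finite-dimensional, Jacobson topological space, and let U be a non-empty open subset of X. Then U is irreducible, equicodimensional, finite-dimensional, and Jacobson, and moreover dim U = dim X. -/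
/-!
In a Jacobson space the minimal irreducible closed subsets are exactly the closed points, and
every irreducible closed subset contains one; hence an equicodimensional Jacobson space has
dimension equal to the codimension of any of its closed points. For an open subset `U`, closure
identifies the irreducible closed subsets of `U` with the upward closed family of those of `X`
meeting `U`, so codimensions are preserved, and the closed points of `U` are closed in `X`.
Comparing the codimension of a closed point of `U` in `U` and in `X` gives both the
equicodimensionality of `U` and `dim U = dim X`.
-/

open TopologicalSpace Order
open Topology

namespace TopologicalSpace.IrreducibleCloseds

variable {X Y : Type*} [TopologicalSpace X] [TopologicalSpace Y]

lemma isMin_of_coe_eq_singleton {Z : IrreducibleCloseds X} {x : X} (h : (Z : Set X) = {x}) :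
    IsMin Z := fun W hW =>
  (IrreducibleCloseds.ext <|
    ((Set.Nonempty.subset_singleton_iff W.isIrreducible.nonempty).mp (h ▸ hW)).trans h.symm).ge

lemma isMin_iff_exists_isClosed_singleton [JacobsonSpace X] {Z : IrreducibleCloseds X} :
    IsMin Z ↔ ∃ x, IsClosed {x} ∧ (Z : Set X) = {x} := by
  refine ⟨fun hZ => ?_, fun ⟨x, _, hx⟩ => isMin_of_coe_eq_singleton hx⟩
  obtain ⟨x, hxZ, hx⟩ :=
    nonempty_inter_closedPoints Z.isIrreducible.nonempty Z.isClosed.isLocallyClosed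
  have hle : (⟨{x}, isIrreducible_singleton, hx⟩ : IrreducibleCloseds X) ≤ Z :=
    Set.singleton_subset_iff.mpr hxZ
  exact ⟨x, hx, congrArg SetLike.coe ((hZ hle).antisymm hle)⟩

lemma exists_isMin_le [JacobsonSpace X] (Z : IrreducibleCloseds X) :
    ∃ W : IrreducibleCloseds X, IsMin W ∧ W ≤ Z := by
  obtain ⟨x, hxZ, hx⟩ :=
    nonempty_inter_closedPoints Z.isIrreducible.nonempty Z.isClosed.isLocallyClosed
  exact ⟨⟨{x}, isIrreducible_singleton, hx⟩, isMin_of_coe_eq_singleton rfl,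
    Set.singleton_subset_iff.mpr hxZ⟩

lemma exists_isMin [JacobsonSpace X] [Nonempty X] : ∃ W : IrreducibleCloseds X, IsMin W :=
  let x : X := Classical.arbitrary X
  (exists_isMin_le ⟨closure {x}, isIrreducible_singleton.closure, isClosed_closure⟩).imp
    fun _ => And.left

lemma isMin_map_of_isOpenEmbedding [JacobsonSpace Y] {f : X → Y} (hf : IsOpenEmbedding f)
    {Z : IrreducibleCloseds X} (hZ : IsMin Z) : IsMin (map f hf.continuous Z) := by
  have := JacobsonSpace.of_isOpenEmbedding hf
  obtain ⟨x, hx, hZx⟩ := isMin_iff_exists_isClosed_singleton.mp hZ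
  have hfx : IsClosed {f x} := by
    rw [← mem_closedPoints_iff, ← Set.mem_preimage, hf.preimage_closedPoints]
    exact hx
  refine isMin_of_coe_eq_singleton (x := f x) ?_
  rw [coe_map, hZx, Set.image_singleton, hfx.closure_eq]

end TopologicalSpace.IrreducibleCloseds

open IrreducibleCloseds

section

variable {X Y : Type*} [TopologicalSpace X] [TopologicalSpace Y]

lemma codimAbove_eq_coheight (Z : IrreducibleCloseds X) : codimAbove Z = coheight Z := by
  rw [coheight_eq_iSup_head_eq, codimAbove, iSup_subtype']

lemma codimAbove_le_spaceDim (Z : IrreducibleCloseds X) : codimAbove Z ≤ spaceDim X :=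
  iSup_le fun p => le_iSup (fun q : LTSeries (IrreducibleCloseds X) => (q.length : ℕ∞)) p.1

lemma spaceDim_eq_iSup_codimAbove : spaceDim X = ⨆ Z : IrreducibleCloseds X, codimAbove Z :=
  le_antisymm
    (iSup_le fun p => le_iSup_of_le p.head <|
      le_iSup (fun q : {q : LTSeries _ // q.head = p.head} => (q.1.length : ℕ∞)) ⟨p, rfl⟩)
    (iSup_le codimAbove_le_spaceDim)

lemma codimAbove_map_of_isOpenEmbedding {f : X → Y} (hf : IsOpenEmbedding f)
    (Z : IrreducibleCloseds X) : codimAbove (map f hf.continuous Z) = codimAbove Z := by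
  simpa only [codimAbove_eq_coheight] using hf.coheight_map Z

lemma IsEquicodim.spaceDim_eq_codimAbove [JacobsonSpace X] (h : IsEquicodim X)
    {Z : IrreducibleCloseds X} (hZ : IsMin Z) : spaceDim X = codimAbove Z := by
  refine le_antisymm ?_ (codimAbove_le_spaceDim Z)
  rw [spaceDim_eq_iSup_codimAbove]
  refine iSup_le fun W => ?_
  obtain ⟨V, hV, hVW⟩ := exists_isMin_le W
  calc codimAbove W ≤ codimAbove V := by
        simpa only [codimAbove_eq_coheight] using coheight_anti hVW
    _ = codimAbove Z := h V Z hV hZ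

lemma IsEquicodim.of_isOpenEmbedding [JacobsonSpace Y] {f : X → Y} (hf : IsOpenEmbedding f)
    (h : IsEquicodim Y) : IsEquicodim X := fun Z Z' hZ hZ' => by
  rw [← codimAbove_map_of_isOpenEmbedding hf, ← codimAbove_map_of_isOpenEmbedding hf Z']
  exact h _ _ (isMin_map_of_isOpenEmbedding hf hZ) (isMin_map_of_isOpenEmbedding hf hZ')

lemma IsEquicodim.spaceDim_eq_of_isOpenEmbedding [JacobsonSpace Y] [Nonempty X] {f : X → Y}
    (hf : IsOpenEmbedding f) (h : IsEquicodim Y) : spaceDim X = spaceDim Y := by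
  have := JacobsonSpace.of_isOpenEmbedding hf
  obtain ⟨Z, hZ⟩ := exists_isMin (X := X)
  calc spaceDim X = codimAbove Z := (h.of_isOpenEmbedding hf).spaceDim_eq_codimAbove hZ
    _ = codimAbove (map f hf.continuous Z) := (codimAbove_map_of_isOpenEmbedding hf Z).symm
    _ = spaceDim Y := (h.spaceDim_eq_codimAbove (isMin_map_of_isOpenEmbedding hf hZ)).symm

end

theorem open_subset_of_equicodim_jacobson (X : Type*) [TopologicalSpace X]
    [IrreducibleSpace X] [JacobsonSpace X] (heq : IsEquicodim X) (hfin : spaceDim X ≠ ⊤)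
    (U : Set X) (hU : IsOpen U) (hne : U.Nonempty) :
    IrreducibleSpace ↥U ∧ JacobsonSpace ↥U ∧ IsEquicodim ↥U ∧
      spaceDim ↥U ≠ ⊤ ∧ spaceDim ↥U = spaceDim X := by
  have hemb : IsOpenEmbedding ((↑) : U → X) := hU.isOpenEmbedding_subtypeVal
  have : Nonempty U := hne.to_subtype
  have hdim : spaceDim U = spaceDim X := heq.spaceDim_eq_of_isOpenEmbedding hemb
  refine ⟨Subtype.irreducibleSpace ⟨hne, ?_⟩, JacobsonSpace.of_isOpenEmbedding hemb,
    heq.of_isOpenEmbedding hemb, hdim ▸ hfin, hdim⟩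
  exact PreirreducibleSpace.isPreirreducible_univ.open_subset hU (Set.subset_univ U)
end

section
/- Let S be a Jacobson, catenary, locally Noetherian scheme all of whose irreducible components are finite-dimensional and equicodimensional, and let s ∈ S be a closed point. Then dim_s S = dim O_{S,s}, i.e., the local dimension of S at s equals the Krull dimension of the local ring at s. -/
open AlgebraicGeometry TopologicalSpace Order
open TopologicalSpace Order

/-!
Both sides are the codimension of the closed point `s`, i.e. the coheight of `{s}` among the
irreducible closed subsets of `S`; for the stalk this is `ringKrullDim_stalk_eq_coheight`.
A chain of irreducible closed subsets starting at `{s}` restricts to any open neighbourhood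
of `s`, which gives `≥`. Conversely, since the irreducible components of a locally Noetherian
scheme are locally finite, some neighbourhood `U` of `s` meets only components through `s`.
A chain in `U` then lies in such a component `T`; its bottom contains a closed point `x`
because `S` is Jacobson, so its length is at most `codim_T {x} = codim_T {s} ≤ codim_S {s}`
by equicodimensionality of `T`.
-/

open Topology Set

lemma IsIrreducible.preimage_of_subset_range {α β : Type*} [TopologicalSpace α]
    [TopologicalSpace β] {f : β → α} (hf : IsInducing f) {t : Set α} (ht : IsIrreducible t)
    (hsub : t ⊆ range f) : IsIrreducible (f ⁻¹' t) := by
  refine ⟨?_, ?_⟩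
  · obtain ⟨_, hx⟩ := ht.nonempty
    obtain ⟨y, rfl⟩ := hsub hx
    exact ⟨y, hx⟩
  · rintro u v hu hv ⟨a, ha, hau⟩ ⟨b, hb, hbv⟩
    obtain ⟨u', hu', rfl⟩ := hf.isOpen_iff.mp hu
    obtain ⟨v', hv', rfl⟩ := hf.isOpen_iff.mp hv
    obtain ⟨_, hz, hzu, hzv⟩ := ht.2 u' v' hu' hv' ⟨f a, ha, hau⟩ ⟨f b, hb, hbv⟩
    obtain ⟨c, rfl⟩ := hsub hz
    exact ⟨c, hz, hzu, hzv⟩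

namespace TopologicalSpace.IrreducibleCloseds

variable {α β : Type*} [TopologicalSpace α] [TopologicalSpace β]

lemma codimAbove_eq_coheight (Y : IrreducibleCloseds α) : codimAbove Y = coheight Y := by
  rw [coheight_eq_iSup_head_eq, iSup_subtype']
  rfl

def ofClosedPoint (x : α) (hx : IsClosed ({x} : Set α)) : IrreducibleCloseds α :=
  ⟨{x}, isIrreducible_singleton, hx⟩

lemma ofClosedPoint_le_iff {x : α} (hx : IsClosed ({x} : Set α)) {Z : IrreducibleCloseds α} :
    ofClosedPoint x hx ≤ Z ↔ x ∈ Z :=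
  singleton_subset_iff

lemma isMin_ofClosedPoint {x : α} (hx : IsClosed ({x} : Set α)) : IsMin (ofClosedPoint x hx) := by
  intro W hW
  obtain ⟨y, hy⟩ := W.isIrreducible.nonempty
  obtain rfl : y = x := hW hy
  exact (ofClosedPoint_le_iff hx).2 hy

noncomputable def orderIsoOfIsClosedEmbedding (f : β → α) (hf : IsClosedEmbedding f) :
    IrreducibleCloseds β ≃o {V : IrreducibleCloseds α | (V : Set α) ⊆ range f} where
  toFun W := ⟨map f hf.continuous W,
    closure_minimal (image_subset_range f W) hf.isClosed_range⟩
  invFun V :=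
    { carrier := f ⁻¹' V
      isIrreducible' := V.1.isIrreducible.preimage_of_subset_range hf.isInducing V.2
      isClosed' := V.1.isClosed.preimage hf.continuous }
  left_inv W := by
    ext : 1
    simp [(hf.isClosedMap W W.isClosed).closure_eq, hf.injective.preimage_image]
  right_inv V := by
    ext : 2
    simp [image_preimage_eq_of_subset V.2, V.1.isClosed.closure_eq]
  map_rel_iff' {a b} := by
    refine ⟨fun hle ↦ ?_, fun hle ↦ map_mono hf.continuous hle⟩
    simpa [← hf.isEmbedding.closure_eq_preimage_closure_image, a.isClosed.closure_eq,
      b.isClosed.closure_eq] using Set.preimage_mono (f := f) hle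

lemma _root_.Topology.IsClosedEmbedding.height_map {f : β → α} (hf : IsClosedEmbedding f)
    (Z : IrreducibleCloseds β) : height (map f hf.continuous Z) = height Z := by
  rw [← height_orderIso (orderIsoOfIsClosedEmbedding f hf) Z]
  refine .symm (height_eq_of_strictMono Subtype.val (Subtype.strictMono_coe _) ?_ _)
  intro a b hlt
  exact ⟨⟨b, Subset.trans hlt.le a.2⟩, hlt, rfl⟩

lemma coheight_le_topologicalKrullDim_of_isOpen {U : Set α} (hU : IsOpen U)
    (Z : IrreducibleCloseds α) (hZU : ((Z : Set α) ∩ U).Nonempty) :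
    (coheight Z : WithBot ℕ∞) ≤ topologicalKrullDim U := by
  have hf := hU.isOpenEmbedding_subtypeVal
  obtain ⟨W, hW⟩ : ∃ W, map Subtype.val hf.continuous W = Z :=
    ⟨_, congrArg Subtype.val ((orderIsoOfIsOpenEmbedding _ hf).apply_symm_apply
      ⟨Z, Subtype.preimage_coe_nonempty.mpr (by rwa [inter_comm])⟩)⟩
  rw [← hW, hf.coheight_map]
  exact coheight_le_krullDim W

lemma height_le_coheight_ofClosedPoint [JacobsonSpace α] (hα : IsEquicodim α) {x : α}
    (hx : IsClosed ({x} : Set α)) (Z : IrreducibleCloseds α) :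
    height Z ≤ coheight (ofClosedPoint x hx) := by
  refine height_le fun p _ ↦ ?_
  obtain ⟨y, hy, hyc⟩ :=
    nonempty_inter_closedPoints p.head.isIrreducible.nonempty p.head.isClosed.isLocallyClosed
  calc (p.length : ℕ∞) ≤ coheight (ofClosedPoint y hyc) :=
        length_le_coheight ((ofClosedPoint_le_iff hyc).2 hy)
    _ = coheight (ofClosedPoint x hx) := by
        simpa only [codimAbove_eq_coheight] using
          hα _ _ (isMin_ofClosedPoint hyc) (isMin_ofClosedPoint hx)

lemma height_le_coheight_ofClosedPoint_of_subset [JacobsonSpace α] {T : Set α} (hT : IsClosed T)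
    (hTequi : IsEquicodim T) {x : α} (hx : IsClosed ({x} : Set α)) (hxT : x ∈ T)
    (Z : IrreducibleCloseds α) (hZT : (Z : Set α) ⊆ T) :
    height Z ≤ coheight (ofClosedPoint x hx) := by
  have hf := hT.isClosedEmbedding_subtypeVal
  have := JacobsonSpace.of_isClosedEmbedding hf
  have hxT' : IsClosed ({⟨x, hxT⟩} : Set T) := by
    rw [← mem_closedPoints_iff, ← hf.preimage_closedPoints]
    exact hx
  obtain ⟨Z', hZ'⟩ : ∃ Z', map Subtype.val hf.continuous Z' = Z :=
    ⟨_, congrArg Subtype.val ((orderIsoOfIsClosedEmbedding _ hf).apply_symm_apply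
      ⟨Z, by simpa using hZT⟩)⟩
  have hx' : map Subtype.val hf.continuous (ofClosedPoint (α := T) ⟨x, hxT⟩ hxT') =
      ofClosedPoint x hx := by
    ext : 1
    simp [ofClosedPoint]
  calc height Z = height Z' := by rw [← hZ', hf.height_map]
    _ ≤ coheight (ofClosedPoint (α := T) ⟨x, hxT⟩ hxT') :=
        height_le_coheight_ofClosedPoint hTequi hxT' Z'
    _ ≤ coheight (ofClosedPoint x hx) := by
        rw [← hx']
        exact coheight_le_coheight_apply_of_strictMono _
          (map_strictMono_of_isInducing hf.isInducing) _

lemma topologicalKrullDim_le_coheight_ofClosedPoint [JacobsonSpace α]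
    (hequi : ∀ T ∈ irreducibleComponents α, IsEquicodim T) {x : α} (hx : IsClosed ({x} : Set α))
    {U : Set α} (hU : ∀ T ∈ irreducibleComponents α, (T ∩ U).Nonempty → x ∈ T) :
    topologicalKrullDim U ≤ coheight (ofClosedPoint x hx) := by
  rw [topologicalKrullDim, krullDim_eq_iSup_height]
  refine iSup_le fun W ↦ WithBot.coe_le_coe.mpr ?_
  obtain ⟨T, hT, hWT⟩ := exists_mem_irreducibleComponents_subset_of_isIrreducible _
    (map Subtype.val continuous_subtype_val W).isIrreducible
  obtain ⟨w, hw⟩ := W.isIrreducible.nonempty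
  have hxT : x ∈ T := hU T hT ⟨w, hWT (subset_closure (mem_image_of_mem _ hw)), w.2⟩
  calc height W ≤ height (map Subtype.val continuous_subtype_val W) :=
        height_le_height_apply_of_strictMono _
          (map_strictMono_of_isInducing IsInducing.subtypeVal) W
    _ ≤ coheight (ofClosedPoint x hx) :=
        height_le_coheight_ofClosedPoint_of_subset (isClosed_of_mem_irreducibleComponents T hT)
          (hequi T hT) hx hxT _ hWT

end TopologicalSpace.IrreducibleCloseds

section irreducibleComponents

variable {α : Type*} [TopologicalSpace α]

lemma finite_irreducibleComponents_inter_nonempty {V : Set α} (hV : IsOpen V)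
    [NoetherianSpace V] : {T ∈ irreducibleComponents α | (T ∩ V).Nonempty}.Finite := by
  have hf := hV.isOpenEmbedding_subtypeVal
  refine Finite.of_finite_image (f := fun T : Set α ↦ (Subtype.val ⁻¹' T : Set V))
    (NoetherianSpace.finite_irreducibleComponents.subset ?_) ?_
  · rintro _ ⟨T, ⟨hT, hTV⟩, rfl⟩
    exact preimage_mem_irreducibleComponents hT hf (by rwa [Subtype.range_coe])
  · rintro T ⟨hT, hTV⟩ T' ⟨hT', hT'V⟩ (h : (Subtype.val ⁻¹' T : Set V) = Subtype.val ⁻¹' T')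
    rw [← closure_image_preimage_of_isPreirreducible _ hf.isOpenMap T
        (Subtype.preimage_coe_nonempty.mpr (by rwa [inter_comm])) hT.1.2
        (isClosed_of_mem_irreducibleComponents T hT),
      ← closure_image_preimage_of_isPreirreducible _ hf.isOpenMap T'
        (Subtype.preimage_coe_nonempty.mpr (by rwa [inter_comm])) hT'.1.2
        (isClosed_of_mem_irreducibleComponents T' hT'), h]

lemma exists_isOpen_mem_forall_mem_irreducibleComponents {V : Set α} (hV : IsOpen V)
    [NoetherianSpace V] {x : α} (hxV : x ∈ V) :
    ∃ U, IsOpen U ∧ x ∈ U ∧ ∀ T ∈ irreducibleComponents α, (T ∩ U).Nonempty → x ∈ T := by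
  let F := {T ∈ irreducibleComponents α | (T ∩ V).Nonempty ∧ x ∉ T}
  have hF : F.Finite := (finite_irreducibleComponents_inter_nonempty hV).subset
    fun T hT ↦ ⟨hT.1, hT.2.1⟩
  refine ⟨V ∩ ⋂ T ∈ F, Tᶜ, hV.inter (hF.isOpen_biInter fun T hT ↦
    (isClosed_of_mem_irreducibleComponents T hT.1).isOpen_compl), ⟨hxV, ?_⟩, ?_⟩
  · exact mem_iInter₂.mpr fun T hT ↦ hT.2.2
  · rintro T hT ⟨y, hyT, hyV, hy⟩
    by_contra hxT
    exact mem_iInter₂.mp hy T ⟨hT, ⟨y, hyT, hyV⟩, hxT⟩ hyT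

end irreducibleComponents

namespace AlgebraicGeometry.Scheme

open IrreducibleCloseds

lemma exists_isOpen_mem_forall_mem_irreducibleComponents (S : Scheme) [IsLocallyNoetherian S]
    (s : S) :
    ∃ U, IsOpen U ∧ s ∈ U ∧ ∀ T ∈ irreducibleComponents S, (T ∩ U).Nonempty → s ∈ T := by
  obtain ⟨_, ⟨V, hV, rfl⟩, hsV, -⟩ :=
    S.isBasis_affineOpens.exists_subset_of_mem_open (mem_univ s) isOpen_univ
  have := IsLocallyNoetherian.component_noetherian ⟨V, hV⟩
  have : NoetherianSpace (V : Set S) := noetherianSpace_of_isAffineOpen V hV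
  exact _root_.exists_isOpen_mem_forall_mem_irreducibleComponents V.isOpen hsV

lemma ringKrullDim_stalk_eq_coheight_ofClosedPoint {S : Scheme} {s : S}
    (hs : IsClosed ({s} : Set S)) :
    ringKrullDim (S.presheaf.stalk s) = coheight (ofClosedPoint s hs) := by
  rw [ringKrullDim_stalk_eq_coheight, ← coheight_orderIso irreducibleSetEquivPoints.symm s]
  congr 2
  ext : 1
  simp [ofClosedPoint]

end AlgebraicGeometry.Scheme

theorem localDim_eq_ringKrullDim_stalk_general (S : Scheme) (hJ : JacobsonSpace S)
    [IsLocallyNoetherian S]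
    (hcomp : ∀ T ∈ irreducibleComponents S,
      topologicalKrullDim ↥T ≠ ⊤ ∧ IsEquicodim ↥T)
    (s : S) (hs : IsClosed ({s} : Set S)) :
    localDim S s = ringKrullDim (S.presheaf.stalk s) := by
  rw [Scheme.ringKrullDim_stalk_eq_coheight_ofClosedPoint hs]
  obtain ⟨U, hU, hsU, hUcomp⟩ := S.exists_isOpen_mem_forall_mem_irreducibleComponents s
  refine le_antisymm ?_ (le_iInf fun V ↦ ?_)
  · exact (iInf_le _ ⟨U, hU, hsU⟩).trans <|
      IrreducibleCloseds.topologicalKrullDim_le_coheight_ofClosedPoint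
        (fun T hT ↦ (hcomp T hT).2) hs hUcomp
  · exact IrreducibleCloseds.coheight_le_topologicalKrullDim_of_isOpen V.2.1 _ ⟨s, rfl, V.2.2⟩

theorem localDim_eq_ringKrullDim_stalk (S : Scheme) (hJ : JacobsonSpace S)
    (hcat : IsCatenarySpace S) [IsLocallyNoetherian S]
    (hcomp : ∀ T ∈ irreducibleComponents S,
      topologicalKrullDim ↥T ≠ ⊤ ∧ IsEquicodim ↥T)
    (s : S) (hs : IsClosed ({s} : Set S)) :
    localDim S s = ringKrullDim (S.presheaf.stalk s) :=
  localDim_eq_ringKrullDim_stalk_general S hJ hcomp s hs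
end
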